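/- The space T₁ of G-invariant sections of O(3,3,3) on ℙ¹×ℙ¹×ℙ¹ for the ℤ/9 action generated by (x,y,z) ↦ (y,z,ωx) (with the linearization induced from the action on H⁰(O(1,1,1)) containing no trivial character) has dimension 8, with basis in affine coordinates: 1; x³+y³+z³; x²y+y²z+ωz²x; x²z+ωy²x+ωz²y; x³y³+y³z³+z³x³; x³y²z+ωy³z²x+z³x²y; x³yz²+ω²y³zx²+z³xy²; x³y³z³. -/

import Mathlib

/-!
The generator sends `xᵃyᵇzᶜ` to `ωᶜ xᶜyᵃzᵇ`, so an invariant section satisfies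
`coeff(a,b,c) = ωᵃ coeff(b,c,a)`. Going once around the rotation gives
`coeff(a,b,c) = ω^(a+b+c) coeff(a,b,c)`, so only exponents with `3 ∣ a+b+c` survive, and on a
rotation-fixed exponent `(a,a,a)` also `3 ∣ a`. Of the rotation orbits in `{0,…,3}³` exactly
eight survive, and an invariant section is determined by its coefficients at one representative
of each. The listed sections are invariant and have coefficient `1` at their own representative
and `0` at the others, so they form a basis.
-/

open MvPolynomial

noncomputable section

/-- The space `H⁰(ℙ¹×ℙ¹×ℙ¹, O(3,3,3))`, realized in affine coordinates as the span of the
monomials `xᵃyᵇz^c` with `0 ≤ a, b, c ≤ 3` (a 64-dimensional space). -/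
def tridegree333 : Submodule ℂ (MvPolynomial (Fin 3) ℂ) :=
  Submodule.span ℂ {p | ∃ m : Fin 3 →₀ ℕ, (∀ i, m i ≤ 3) ∧ p = monomial m 1}

/-- The generator of the `ℤ/9`-action on sections: in affine coordinates `x = X 0`,
`y = X 1`, `z = X 2`, it is the substitution `(x, y, z) ↦ (y, z, ωx)` (this substitution
action is the linearization induced from the action on `H⁰(O(1,1,1))` containing no
trivial character). -/
def genAction (ω : ℂ) : MvPolynomial (Fin 3) ℂ →ₐ[ℂ] MvPolynomial (Fin 3) ℂ :=
  aeval ![X 1, X 2, C ω * X 0]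

/-- The space `T₁` of invariant sections of `O(3,3,3)` under the `ℤ/9`-action. -/
def T1 (ω : ℂ) : Submodule ℂ (MvPolynomial (Fin 3) ℂ) :=
  tridegree333 ⊓ LinearMap.ker ((genAction ω).toLinearMap - LinearMap.id)

/-- The eight invariant sections, in affine coordinates `x = X 0`, `y = X 1`, `z = X 2`:
`1; x³+y³+z³; x²y+y²z+ωz²x; x²z+ωy²x+ωz²y; x³y³+y³z³+z³x³; x³y²z+ωy³z²x+z³x²y;
x³yz²+ω²y³zx²+z³xy²; x³y³z³`. -/
def basisT1 (ω : ℂ) : Fin 8 → MvPolynomial (Fin 3) ℂ :=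
  ![1,
    X 0 ^ 3 + X 1 ^ 3 + X 2 ^ 3,
    X 0 ^ 2 * X 1 + X 1 ^ 2 * X 2 + C ω * (X 2 ^ 2 * X 0),
    X 0 ^ 2 * X 2 + C ω * (X 1 ^ 2 * X 0) + C ω * (X 2 ^ 2 * X 1),
    X 0 ^ 3 * X 1 ^ 3 + X 1 ^ 3 * X 2 ^ 3 + X 2 ^ 3 * X 0 ^ 3,
    X 0 ^ 3 * X 1 ^ 2 * X 2 + C ω * (X 1 ^ 3 * X 2 ^ 2 * X 0) + X 2 ^ 3 * X 0 ^ 2 * X 1,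
    X 0 ^ 3 * X 1 * X 2 ^ 2 + C ω ^ 2 * (X 1 ^ 3 * X 2 * X 0 ^ 2) + X 2 ^ 3 * X 0 * X 1 ^ 2,
    X 0 ^ 3 * X 1 ^ 3 * X 2 ^ 3]

theorem IsPrimitiveRoot.eq_zero_of_eq_pow_mul {R : Type*} [CommRing R] [NoZeroDivisors R]
    {ζ x : R} {k n : ℕ} (hζ : IsPrimitiveRoot ζ k) (hn : ¬ k ∣ n) (h : x = ζ ^ n * x) :
    x = 0 := by
  have hζn : ζ ^ n - 1 ≠ 0 := sub_ne_zero.2 fun h1 => hn (hζ.pow_eq_one_iff_dvd n |>.1 h1)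
  exact (mul_eq_zero.1 (by linear_combination -h : (ζ ^ n - 1) * x = 0)).resolve_left hζn

theorem MvPolynomial.coeff_eq_zero_of_mem_restrictDegree {σ R : Type*} [CommSemiring R]
    {p : MvPolynomial σ R} {n : ℕ} (hp : p ∈ restrictDegree σ R n) {m : σ →₀ ℕ} {i : σ}
    (hi : n < m i) : coeff m p = 0 :=
  notMem_support_iff.1 fun hm => hi.not_ge ((mem_restrictDegree σ p n).1 hp m hm i)

theorem Submodule.eq_span_range_of_apply_eq_single {R M ι : Type*} [Ring R] [AddCommGroup M]
    [Module R M] [Fintype ι] [DecidableEq ι] {V : Submodule R M} {f : M →ₗ[R] ι → R}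
    (hf : ∀ p ∈ V, f p = 0 → p = 0) {v : ι → M} (hv : ∀ i, v i ∈ V)
    (hfv : ∀ i, f (v i) = Pi.single i 1) : V = span R (Set.range v) := by
  refine le_antisymm (fun p hp => ?_) (span_le.2 (Set.range_subset_iff.2 hv))
  have hq : p - ∑ i, f p i • v i = 0 := by
    refine hf _ (sub_mem hp (sum_mem fun i _ => smul_mem _ _ (hv i))) ?_
    simp [hfv, ← Pi.single_smul', Finset.univ_sum_single]
  rw [sub_eq_zero.1 hq]
  exact sum_mem fun i _ => smul_mem _ _ (subset_span ⟨i, rfl⟩)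

theorem linearIndependent_of_apply_eq_single {R M ι : Type*} [Semiring R] [AddCommMonoid M]
    [Module R M] [DecidableEq ι] (f : M →ₗ[R] ι → R) {v : ι → M}
    (hfv : ∀ i, f (v i) = Pi.single i 1) : LinearIndependent R v :=
  .of_comp f (by simpa [Function.comp_def, hfv] using Pi.linearIndependent_single_one ι R)

def exponent (a b c : ℕ) : Fin 3 →₀ ℕ := Finsupp.equivFunOnFinite.symm ![a, b, c]

@[simp]
lemma exponent_apply (a b c : ℕ) (i : Fin 3) : exponent a b c i = ![a, b, c] i := rfl

lemma exponent_eq_exponent_iff {a b c a' b' c' : ℕ} :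
    exponent a b c = exponent a' b' c' ↔ a = a' ∧ b = b' ∧ c = c' := by
  simp [exponent, Matrix.vecCons_inj]

lemma eq_exponent (m : Fin 3 →₀ ℕ) : m = exponent (m 0) (m 1) (m 2) := by
  ext i; fin_cases i <;> rfl

lemma monomial_exponent (a b c : ℕ) (r : ℂ) :
    monomial (exponent a b c) r = C r * X 0 ^ a * X 1 ^ b * X 2 ^ c := by
  rw [monomial_eq, Finsupp.prod_fintype _ _ fun _ => pow_zero _, Fin.prod_univ_three]
  simp [mul_assoc]

lemma genAction_monomial (ω : ℂ) (a b c : ℕ) (r : ℂ) :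
    genAction ω (monomial (exponent a b c) r) = monomial (exponent c a b) (ω ^ c * r) := by
  simp only [genAction, aeval_eq_bind₁, monomial_exponent, map_mul, algHom_C, algebraMap_eq,
    map_pow, bind₁_X_right, Matrix.cons_val_zero, Matrix.cons_val_one, Matrix.cons_val]
  ring

lemma coeff_genAction (ω : ℂ) (p : MvPolynomial (Fin 3) ℂ) (a b c : ℕ) :
    coeff (exponent a b c) (genAction ω p) = ω ^ a * coeff (exponent b c a) p := by
  induction p using MvPolynomial.induction_on' with
  | monomial m r =>
    rw [eq_exponent m, genAction_monomial, coeff_monomial, coeff_monomial]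
    simp only [exponent_eq_exponent_iff]
    split_ifs <;> grind
  | add p q hp hq => simp only [map_add, coeff_add, hp, hq, mul_add]

lemma tridegree333_eq_restrictDegree : tridegree333 = restrictDegree (Fin 3) ℂ 3 := by
  rw [tridegree333, restrictDegree, restrictSupport_eq_span]
  congr 1
  ext p
  simp [eq_comm]

lemma mem_T1 {ω : ℂ} {p : MvPolynomial (Fin 3) ℂ} :
    p ∈ T1 ω ↔ p ∈ restrictDegree (Fin 3) ℂ 3 ∧ genAction ω p = p := by
  simp [T1, tridegree333_eq_restrictDegree, sub_eq_zero]

section Invariant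

variable {ω : ℂ} {p : MvPolynomial (Fin 3) ℂ}

lemma coeff_eq_pow_mul_coeff_rotate (hp : genAction ω p = p) (a b c : ℕ) :
    coeff (exponent a b c) p = ω ^ a * coeff (exponent b c a) p := by
  rw [← coeff_genAction, hp]

lemma coeff_eq_pow_add_mul_coeff (hp : genAction ω p = p) (a b c : ℕ) :
    coeff (exponent a b c) p = ω ^ (a + b + c) * coeff (exponent a b c) p := by
  rw [pow_add, pow_add]
  linear_combination coeff_eq_pow_mul_coeff_rotate hp a b c
    + ω ^ a * coeff_eq_pow_mul_coeff_rotate hp b c a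
    + ω ^ a * ω ^ b * coeff_eq_pow_mul_coeff_rotate hp c a b

end Invariant

/-- One exponent from each orbit of the rotation `(a, b, c) ↦ (b, c, a)` on `{0, …, 3}³` that
can carry a nonzero coefficient of an invariant section; `orbitRep i` is the leading exponent of
`basisT1 ω i`. -/
def orbitRep : Fin 8 → Fin 3 → ℕ :=
  ![![0, 0, 0], ![3, 0, 0], ![2, 1, 0], ![2, 0, 1], ![3, 3, 0], ![3, 2, 1], ![3, 1, 2], ![3, 3, 3]]

set_option synthInstance.maxSize 1024 in
lemma exists_orbitRep_eq_rotate :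
    ∀ a < 4, ∀ b < 4, ∀ c < 4, 3 ∣ a + b + c → (a = b ∧ b = c → 3 ∣ a) →
      ∃ i, orbitRep i = ![a, b, c] ∨ orbitRep i = ![b, c, a] ∨ orbitRep i = ![c, a, b] := by
  decide

def orbitRepCoeffs : MvPolynomial (Fin 3) ℂ →ₗ[ℂ] Fin 8 → ℂ :=
  LinearMap.pi fun i => lcoeff ℂ (Finsupp.equivFunOnFinite.symm (orbitRep i))

lemma eq_zero_of_mem_T1_of_orbitRepCoeffs_eq_zero {ω : ℂ} (hω : IsPrimitiveRoot ω 3)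
    {p : MvPolynomial (Fin 3) ℂ} (hp : p ∈ T1 ω) (hrep : orbitRepCoeffs p = 0) : p = 0 := by
  obtain ⟨hdeg, hfix⟩ := mem_T1.1 hp
  have hrot := coeff_eq_pow_mul_coeff_rotate hfix
  ext m
  rw [coeff_zero]
  by_cases hbound : ∀ i, m i ≤ 3
  swap
  · obtain ⟨i, hi⟩ := not_forall.1 hbound
    exact coeff_eq_zero_of_mem_restrictDegree hdeg (not_le.1 hi)
  obtain ⟨ha, hb, hc⟩ : m 0 < 4 ∧ m 1 < 4 ∧ m 2 < 4 :=
    ⟨Nat.lt_succ_of_le (hbound 0), Nat.lt_succ_of_le (hbound 1), Nat.lt_succ_of_le (hbound 2)⟩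
  rw [eq_exponent m]
  generalize m 0 = a, m 1 = b, m 2 = c at ha hb hc
  by_cases hsum : 3 ∣ a + b + c
  swap
  · exact hω.eq_zero_of_eq_pow_mul hsum (coeff_eq_pow_add_mul_coeff hfix a b c)
  by_cases hdiag : a = b ∧ b = c → 3 ∣ a
  swap
  · obtain ⟨⟨rfl, rfl⟩, ha⟩ := Classical.not_imp.1 hdiag
    exact hω.eq_zero_of_eq_pow_mul ha (hrot a a a)
  obtain ⟨i, hi⟩ := exists_orbitRep_eq_rotate a ha b hb c hc hsum hdiag
  have hi0 : coeff (Finsupp.equivFunOnFinite.symm (orbitRep i)) p = 0 := congr_fun hrep i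
  rcases hi with hi | hi | hi <;> rw [hi] at hi0
  · exact hi0
  · rw [hrot, show coeff (exponent b c a) p = 0 from hi0, mul_zero]
  · rw [hrot, hrot, show coeff (exponent c a b) p = 0 from hi0, mul_zero, mul_zero]

lemma basisT1_eq (ω : ℂ) : basisT1 ω = ![monomial (exponent 0 0 0) 1,
    monomial (exponent 3 0 0) 1 + monomial (exponent 0 3 0) 1 + monomial (exponent 0 0 3) 1,
    monomial (exponent 2 1 0) 1 + monomial (exponent 0 2 1) 1 + monomial (exponent 1 0 2) ω,
    monomial (exponent 2 0 1) 1 + monomial (exponent 1 2 0) ω + monomial (exponent 0 1 2) ω,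
    monomial (exponent 3 3 0) 1 + monomial (exponent 0 3 3) 1 + monomial (exponent 3 0 3) 1,
    monomial (exponent 3 2 1) 1 + monomial (exponent 1 3 2) ω + monomial (exponent 2 1 3) 1,
    monomial (exponent 3 1 2) 1 + monomial (exponent 2 3 1) (ω ^ 2) + monomial (exponent 1 2 3) 1,
    monomial (exponent 3 3 3) 1] := by
  ext1 i
  fin_cases i <;>
    simp only [basisT1, Fin.zero_eta, Fin.mk_one, Fin.reduceFinMk, Matrix.cons_val_zero,
      Matrix.cons_val_one, Matrix.cons_val, monomial_exponent, C_1, pow_zero, mul_one, one_mul,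
      pow_one, C_pow] <;>
    ring

lemma orbitRepCoeffs_basisT1 (ω : ℂ) (i : Fin 8) :
    orbitRepCoeffs (basisT1 ω i) = Pi.single i 1 := by
  ext j
  fin_cases i <;> fin_cases j <;>
    simp [orbitRepCoeffs, basisT1_eq, orbitRep, exponent, coeff_monomial]

lemma basisT1_mem_T1 {ω : ℂ} (hω : ω ^ 3 = 1) (i : Fin 8) : basisT1 ω i ∈ T1 ω := by
  refine mem_T1.2 ⟨?_, ?_⟩
  · fin_cases i <;> simp [basisT1_eq, restrictDegree, Submodule.add_mem, Fin.forall_fin_succ]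
  · fin_cases i <;>
      simp only [basisT1_eq, Fin.zero_eta, Fin.mk_one, Fin.reduceFinMk, Matrix.cons_val_zero,
        Matrix.cons_val_one, Matrix.cons_val, map_add, genAction_monomial, pow_zero, pow_one,
        mul_one, one_mul, ← pow_succ, ← pow_succ', hω] <;>
      abel

/-- For the `ℤ/9`-action on `ℙ¹×ℙ¹×ℙ¹` generated by `(x,y,z) ↦ (y,z,ωx)` (`ω` a primitive
cube root of unity), the space `T₁` of invariant sections of `O(3,3,3)` has dimension 8,
with the eight listed sections as a basis. -/
theorem T1_dimension_and_basis (ω : ℂ) (hω : IsPrimitiveRoot ω 3) :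
    Module.finrank ℂ (T1 ω) = 8 ∧
    T1 ω = Submodule.span ℂ (Set.range (basisT1 ω)) ∧
    LinearIndependent ℂ (basisT1 ω) := by
  have hspan : T1 ω = Submodule.span ℂ (Set.range (basisT1 ω)) :=
    Submodule.eq_span_range_of_apply_eq_single
      (fun _ hp => eq_zero_of_mem_T1_of_orbitRepCoeffs_eq_zero hω hp)
      (basisT1_mem_T1 hω.pow_eq_one) (orbitRepCoeffs_basisT1 ω)
  have hli : LinearIndependent ℂ (basisT1 ω) :=
    linearIndependent_of_apply_eq_single orbitRepCoeffs (orbitRepCoeffs_basisT1 ω)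
  refine ⟨?_, hspan, hli⟩
  rw [hspan, finrank_span_eq_card hli, Fintype.card_fin]

end
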